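/- arXiv:0911.2863 — 6 statements merged into one kernel-verified Lean document; each statement's English description precedes it below -/
import Mathlib

section
/- In an inverse semigroup, if the meet s ∧ t exists in the natural partial order, then for any element u, the meet us ∧ ut exists and u(s ∧ t) = us ∧ ut; dually, su ∧ tu exists and (s ∧ t)u = su ∧ tu. -/
section Defs
variable {S : Type*}

/-- An idempotent element. -/
def IsIdem [Mul S] (e : S) : Prop := e * e = e

/-- The natural partial order on an inverse semigroup: `s ≤ t` iff `s = t * e`
for some idempotent `e`. -/
def nle [Mul S] (s t : S) : Prop := ∃ e : S, IsIdem e ∧ s = t * e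

/-- `m` is the meet (greatest lower bound) of `s` and `t` for the natural partial order. -/
def IsMeet [Mul S] (s t m : S) : Prop :=
  nle m s ∧ nle m t ∧ ∀ u : S, nle u s → nle u t → nle u m

/-- `j` is the join (least upper bound) of `s` and `t` for the natural partial order. -/
def IsJoin [Mul S] (s t j : S) : Prop :=
  nle s j ∧ nle t j ∧ ∀ u : S, nle s u → nle t u → nle j u

/-- Compatible elements: `s⁻¹ * t` and `s * t⁻¹` are idempotents. -/
def Compatible [Mul S] [Inv S] (s t : S) : Prop :=
  IsIdem (s⁻¹ * t) ∧ IsIdem (s * t⁻¹)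

/-- Orthogonal elements: `s⁻¹ * t = 0` and `s * t⁻¹ = 0`. -/
def Orthogonal [Mul S] [Inv S] [Zero S] (s t : S) : Prop :=
  s⁻¹ * t = 0 ∧ s * t⁻¹ = 0

/-- A filter: a nonempty, upwardly closed, down-directed subset. -/
def IsFilter' [Mul S] (F : Set S) : Prop :=
  F.Nonempty ∧ (∀ s t : S, s ∈ F → nle s t → t ∈ F) ∧
    (∀ s t : S, s ∈ F → t ∈ F → ∃ u ∈ F, nle u s ∧ nle u t)

/-- A proper filter: a filter not containing `0`. -/
def IsProperFilter [Mul S] [Zero S] (F : Set S) : Prop :=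
  IsFilter' F ∧ (0 : S) ∉ F

/-- An ultrafilter: a proper filter maximal among proper filters. -/
def IsUltrafilter' [Mul S] [Zero S] (F : Set S) : Prop :=
  IsProperFilter F ∧ ∀ G : Set S, IsProperFilter G → F ⊆ G → G = F

/-- Upward closure of a subset with respect to the natural partial order. -/
def upClosure [Mul S] (X : Set S) : Set S := {s | ∃ x ∈ X, nle x s}

end Defs

/-- An inverse semigroup: every element `a` has a unique inverse `a⁻¹`. -/
class InverseSemigroup (S : Type*) extends Semigroup S, Inv S where
  mul_inv_mul : ∀ a : S, a * a⁻¹ * a = a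
  inv_mul_inv : ∀ a : S, a⁻¹ * a * a⁻¹ = a⁻¹
  inv_unique : ∀ a b : S, a * b * a = a → b * a * b = b → b = a⁻¹

/-- An inverse monoid: an inverse semigroup with an identity. -/
class InverseMonoid (S : Type*) extends Monoid S, Inv S where
  mul_inv_mul : ∀ a : S, a * a⁻¹ * a = a
  inv_mul_inv : ∀ a : S, a⁻¹ * a * a⁻¹ = a⁻¹
  inv_unique : ∀ a b : S, a * b * a = a → b * a * b = b → b = a⁻¹

/-- A boolean inverse monoid: an inverse monoid with zero such that
(BM1) the idempotents form a boolean algebra under the natural partial order,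
(BM2) the natural partial order is a meet semilattice, and
(BM3) orthogonal pairs of elements have joins. -/
class BooleanInverseMonoid (S : Type*) extends Monoid S, Inv S, Zero S where
  zero_mul : ∀ a : S, 0 * a = 0
  mul_zero : ∀ a : S, a * 0 = 0
  mul_inv_mul : ∀ a : S, a * a⁻¹ * a = a
  inv_mul_inv : ∀ a : S, a⁻¹ * a * a⁻¹ = a⁻¹
  inv_unique : ∀ a b : S, a * b * a = a → b * a * b = b → b = a⁻¹
  meet_exists : ∀ s t : S, ∃ m : S, IsMeet s t m
  idem_join : ∀ e f : S, IsIdem e → IsIdem f → ∃ g : S, IsIdem g ∧ IsJoin e f g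
  idem_compl : ∀ e : S, IsIdem e → ∃ e' : S, IsIdem e' ∧ e * e' = 0 ∧ IsJoin e e' 1
  idem_distrib : ∀ e f g j : S, IsIdem e → IsIdem f → IsIdem g → IsJoin f g j →
    IsJoin (e * f) (e * g) (e * j)
  orthogonal_join : ∀ s t : S, s⁻¹ * t = 0 → s * t⁻¹ = 0 → ∃ j : S, IsJoin s t j

namespace ISG
variable {S : Type*} [InverseSemigroup S]

open InverseSemigroup

lemma inv_invol (a : S) : a⁻¹⁻¹ = a :=
  (inv_unique a⁻¹ a (inv_mul_inv a) (mul_inv_mul a)).symm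

lemma idem_inv {e : S} (he : IsIdem e) : e⁻¹ = e := by
  have := inv_unique e e (by rw [he, he]) (by rw [he, he])
  exact this.symm

lemma idem_cancel {e : S} (he : IsIdem e) (t : S) : e * (e * t) = e * t := by
  rw [← mul_assoc, he]

lemma idem_mul {e f : S} (he : IsIdem e) (hf : IsIdem f) : IsIdem (e * f) := by
  set x := (e * f)⁻¹ with hx
  have hx1 : e * f * x * (e * f) = e * f := mul_inv_mul (e * f)
  have hx2 : x * (e * f) * x = x := inv_mul_inv (e * f)
  have key : f * x * e = x := by
    refine (inv_unique (e * f) (f * x * e) ?_ ?_).trans hx.symm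
    · -- (ef)(fxe)(ef) = ef
      have : e * f * (f * x * e) * (e * f) = e * f * x * (e * f) := by
        simp only [mul_assoc]
        rw [idem_cancel hf, ← mul_assoc e e, he]
      rw [this, hx1]
    · -- (fxe)(ef)(fxe) = fxe
      have : f * x * e * (e * f) * (f * x * e) = f * (x * (e * f) * x) * e := by
        simp only [mul_assoc]
        rw [idem_cancel he (f * (f * (x * e))), idem_cancel hf (x * e)]
      rw [this, hx2]
  have hx2' : ∀ c, x * (e * (f * (x * c))) = x * c := by
    intro c
    have := congrArg (· * c) hx2
    simpa only [mul_assoc] using this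
  have hxid : IsIdem x := by
    have h4 : (f * x * e) * (f * x * e) = f * x * e := by
      simp only [mul_assoc]; rw [hx2' e]
    rw [key] at h4; exact h4
  have : x⁻¹ = e * f := by rw [hx, inv_invol]
  rw [← this, idem_inv hxid]; exact hxid

lemma idem_comm {e f : S} (he : IsIdem e) (hf : IsIdem f) : e * f = f * e := by
  have hef : IsIdem (e * f) := idem_mul he hf
  have hfe : IsIdem (f * e) := idem_mul hf he
  have : f * e = (e * f)⁻¹ := by
    refine inv_unique (e * f) (f * e) ?_ ?_
    · -- ef fe ef = ef
      have : e * f * (f * e) * (e * f) = (e * f) * (e * f) := by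
        simp only [mul_assoc]
        rw [idem_cancel hf (e * (e * f)), idem_cancel he f]
      rw [this, hef]
    · have : f * e * (e * f) * (f * e) = (f * e) * (f * e) := by
        simp only [mul_assoc]
        rw [idem_cancel he (f * (f * e)), idem_cancel hf e]
      rw [this, hfe]
  rw [this, idem_inv hef]

lemma isIdem_inv_mul (a : S) : IsIdem (a⁻¹ * a) := by
  show a⁻¹ * a * (a⁻¹ * a) = a⁻¹ * a
  rw [← mul_assoc, inv_mul_inv]

lemma isIdem_mul_inv (a : S) : IsIdem (a * a⁻¹) := by
  show a * a⁻¹ * (a * a⁻¹) = a * a⁻¹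
  rw [← mul_assoc, mul_inv_mul]

lemma nle_refl (s : S) : nle s s := ⟨s⁻¹ * s, isIdem_inv_mul s, (mul_inv_mul s).symm.trans (by rw [mul_assoc])⟩

lemma nle_trans {a b c : S} (h1 : nle a b) (h2 : nle b c) : nle a c := by
  obtain ⟨e, he, rfl⟩ := h1
  obtain ⟨f, hf, rfl⟩ := h2
  exact ⟨f * e, idem_mul hf he, by rw [mul_assoc]⟩

lemma mul_inv_rev (a b : S) : (a * b)⁻¹ = b⁻¹ * a⁻¹ := by
  refine (inv_unique (a * b) (b⁻¹ * a⁻¹) ?_ ?_).symm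
  · have : a * b * (b⁻¹ * a⁻¹) * (a * b) = a * (b * b⁻¹ * (a⁻¹ * a)) * b := by
      simp only [mul_assoc]
    rw [this, idem_comm (isIdem_mul_inv b) (isIdem_inv_mul a)]
    have : a * (a⁻¹ * a * (b * b⁻¹)) * b = (a * a⁻¹ * a) * (b * b⁻¹ * b) := by
      simp only [mul_assoc]
    rw [this, mul_inv_mul, mul_inv_mul]
  · have : b⁻¹ * a⁻¹ * (a * b) * (b⁻¹ * a⁻¹) = b⁻¹ * (a⁻¹ * a * (b * b⁻¹)) * a⁻¹ := by
      simp only [mul_assoc]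
    rw [this, idem_comm (isIdem_inv_mul a) (isIdem_mul_inv b)]
    have : b⁻¹ * (b * b⁻¹ * (a⁻¹ * a)) * a⁻¹ = (b⁻¹ * b * b⁻¹) * (a⁻¹ * a * a⁻¹) := by
      simp only [mul_assoc]
    rw [this, inv_mul_inv, inv_mul_inv]

/-- left characterization of the natural order -/
lemma nle_left {s t : S} (h : nle s t) : ∃ f : S, IsIdem f ∧ s = f * t := by
  obtain ⟨e, he, rfl⟩ := h
  refine ⟨t * e * (t * e)⁻¹, isIdem_mul_inv _, ?_⟩
  rw [mul_inv_rev, idem_inv he]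
  have : t * e * (e * t⁻¹) * t = t * (e * (e * (t⁻¹ * t))) := by simp only [mul_assoc]
  rw [this, idem_cancel he, idem_comm he (isIdem_inv_mul t), ← mul_assoc, ← mul_assoc,
    mul_inv_mul]

lemma nle_of_left {s t f : S} (hf : IsIdem f) (h : s = f * t) : nle s t := by
  subst h
  refine ⟨(f * t)⁻¹ * (f * t), isIdem_inv_mul _, ?_⟩
  rw [mul_inv_rev, idem_inv hf]
  have : t * (t⁻¹ * f * (f * t)) = t * t⁻¹ * (f * (f * t)) := by simp only [mul_assoc]
  rw [this, idem_cancel hf, ← mul_assoc, idem_comm (isIdem_mul_inv t) hf,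
    mul_assoc, mul_inv_mul]

lemma mul_nle_mul_left {s t : S} (u : S) (h : nle s t) : nle (u * s) (u * t) := by
  obtain ⟨e, he, rfl⟩ := h
  exact ⟨e, he, by rw [mul_assoc]⟩

lemma mul_nle_mul_right {s t : S} (u : S) (h : nle s t) : nle (s * u) (t * u) := by
  obtain ⟨f, hf, rfl⟩ := nle_left h
  exact nle_of_left hf (by rw [mul_assoc])

lemma idem_mul_nle {f : S} (hf : IsIdem f) (w : S) : nle (f * w) w :=
  nle_of_left hf rfl

lemma mul_idem_nle {e : S} (he : IsIdem e) (w : S) : nle (w * e) w := ⟨e, he, rfl⟩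

end ISG

open ISG InverseSemigroup in
theorem stmt2 {S : Type*} [InverseSemigroup S] (s t m : S) (h : IsMeet s t m) (u : S) :
    IsMeet (u * s) (u * t) (u * m) ∧ IsMeet (s * u) (t * u) (m * u) := by
  obtain ⟨hms, hmt, hmin⟩ := h
  constructor
  · refine ⟨mul_nle_mul_left u hms, mul_nle_mul_left u hmt, fun x hxs hxt => ?_⟩
    obtain ⟨e, he, hxe⟩ := hxs
    have hfix : u * (u⁻¹ * x) = x := by
      rw [hxe, ← mul_assoc, ← mul_assoc, ← mul_assoc, mul_inv_mul]
    have hys : nle (u⁻¹ * x) s := by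
      have : u⁻¹ * x = (u⁻¹ * u) * (s * e) := by
        rw [hxe]; simp only [mul_assoc]
      rw [this]
      exact nle_trans (idem_mul_nle (isIdem_inv_mul u) _) (mul_idem_nle he s)
    obtain ⟨e', he', hxe'⟩ := hxt
    have hyt : nle (u⁻¹ * x) t := by
      have : u⁻¹ * x = (u⁻¹ * u) * (t * e') := by
        rw [hxe']; simp only [mul_assoc]
      rw [this]
      exact nle_trans (idem_mul_nle (isIdem_inv_mul u) _) (mul_idem_nle he' t)
    have := mul_nle_mul_left u (hmin _ hys hyt)
    rwa [hfix] at this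
  · refine ⟨mul_nle_mul_right u hms, mul_nle_mul_right u hmt, fun x hxs hxt => ?_⟩
    obtain ⟨f, hf, hxf⟩ := nle_left hxs
    have hfix : (x * u⁻¹) * u = x := by
      rw [hxf]; simp only [mul_assoc]; rw [← mul_assoc u, mul_inv_mul]
    have hys : nle (x * u⁻¹) s := by
      have : x * u⁻¹ = f * (s * (u * u⁻¹)) := by rw [hxf]; simp only [mul_assoc]
      rw [this]
      exact nle_trans (idem_mul_nle hf _) (mul_idem_nle (isIdem_mul_inv u) s)
    obtain ⟨f', hf', hxf'⟩ := nle_left hxt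
    have hyt : nle (x * u⁻¹) t := by
      have : x * u⁻¹ = f' * (t * (u * u⁻¹)) := by rw [hxf']; simp only [mul_assoc]
      rw [this]
      exact nle_trans (idem_mul_nle hf' _) (mul_idem_nle (isIdem_mul_inv u) t)
    have := mul_nle_mul_right u (hmin _ hys hyt)
    rwa [hfix] at this
end

section
/- Let S be a boolean inverse monoid, s ≠ 0, and suppose s is not ≤ t. Then there exists a nonzero element s' with s' ≤ s and s' ∧ t = 0. -/
namespace BIMAux

variable {S : Type*} [BooleanInverseMonoid S]

private lemma mim (a : S) : a * a⁻¹ * a = a := BooleanInverseMonoid.mul_inv_mul a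
private lemma imi (a : S) : a⁻¹ * a * a⁻¹ = a⁻¹ := BooleanInverseMonoid.inv_mul_inv a
private lemma iuq (a b : S) (h1 : a * b * a = a) (h2 : b * a * b = b) : b = a⁻¹ :=
  BooleanInverseMonoid.inv_unique a b h1 h2

private lemma pmim (a x : S) : a * (a⁻¹ * (a * x)) = a * x := by
  rw [← mul_assoc, ← mul_assoc, mim]
private lemma pimi (a x : S) : a⁻¹ * (a * (a⁻¹ * x)) = a⁻¹ * x := by
  rw [← mul_assoc, ← mul_assoc, imi]
private lemma tmim (a : S) : a * (a⁻¹ * a) = a := by rw [← mul_assoc, mim]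
private lemma timi (a : S) : a⁻¹ * (a * a⁻¹) = a⁻¹ := by rw [← mul_assoc, imi]
private lemma pidem {e : S} (he : IsIdem e) (x : S) : e * (e * x) = e * x := by
  rw [← mul_assoc, he]

private lemma inv_invS (a : S) : a⁻¹⁻¹ = a := (iuq a⁻¹ a (imi a) (mim a)).symm

private lemma idem_inv {e : S} (he : IsIdem e) : e⁻¹ = e :=
  (iuq e e (by rw [he, he]) (by rw [he, he])).symm

private lemma inv_mul_idem {e f : S} (he : IsIdem e) (hf : IsIdem f) :
    (e * f)⁻¹ = f * ((e * f)⁻¹ * e) ∧ IsIdem ((e * f)⁻¹) := by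
  set g := (e * f)⁻¹ with hg
  have c1 : (e * f) * (f * (g * e)) * (e * f) = e * f := by
    simp only [mul_assoc]
    simp only [pidem he, pidem hf, he, hf]
    have := pmim (e * f) 1
    simp only [mul_assoc, mul_one] at this
    simpa [mul_assoc] using this
  have key : g * (e * (f * (g * e))) = g * e := by
    have h := pimi (e * f) e
    simp only [mul_assoc] at h
    rw [← hg] at h
    exact h
  have c2 : (f * (g * e)) * (e * f) * (f * (g * e)) = f * (g * e) := by
    simp only [mul_assoc]
    simp only [pidem he, pidem hf, he, hf]
    rw [key]
  have hbg : f * (g * e) = g := iuq (e * f) (f * (g * e)) c1 c2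
  have hgg : IsIdem g := by
    show g * g = g
    conv_lhs => rw [← hbg]
    calc f * (g * e) * (f * (g * e)) = f * (g * (e * (f * (g * e)))) := by
          simp only [mul_assoc]
      _ = f * (g * e) := by rw [key]
      _ = g := hbg
  exact ⟨hbg.symm, hgg⟩

private lemma idem_mul {e f : S} (he : IsIdem e) (hf : IsIdem f) : IsIdem (e * f) := by
  have h := (inv_mul_idem he hf).2
  have : e * f = (e * f)⁻¹ := by
    conv_lhs => rw [← inv_invS (e * f)]
    rw [idem_inv h]
  rw [this]; exact h

private lemma idem_comm {e f : S} (he : IsIdem e) (hf : IsIdem f) : e * f = f * e := by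
  have h1 : e * f = (e * f)⁻¹ := by
    conv_lhs => rw [← inv_invS (e * f)]
    rw [idem_inv (inv_mul_idem he hf).2]
  have h2 := (inv_mul_idem he hf).1
  calc e * f = (e * f)⁻¹ := h1
    _ = f * ((e * f)⁻¹ * e) := h2
    _ = f * (e * f * e) := by rw [← h1]
    _ = (f * e) * (f * e) := by simp only [mul_assoc]
    _ = f * e := idem_mul hf he

private lemma dom_idem (a : S) : IsIdem (a⁻¹ * a) := by
  show a⁻¹ * a * (a⁻¹ * a) = a⁻¹ * a
  rw [mul_assoc, pimi]

private lemma ran_idem (a : S) : IsIdem (a * a⁻¹) := by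
  show a * a⁻¹ * (a * a⁻¹) = a * a⁻¹
  rw [mul_assoc, pmim]

private lemma mul_invS (a b : S) : (a * b)⁻¹ = b⁻¹ * a⁻¹ := by
  refine (iuq (a * b) (b⁻¹ * a⁻¹) ?_ ?_).symm
  · calc a * b * (b⁻¹ * a⁻¹) * (a * b) = a * ((b * b⁻¹) * (a⁻¹ * a)) * b := by
          simp only [mul_assoc]
      _ = a * ((a⁻¹ * a) * (b * b⁻¹)) * b := by rw [idem_comm (ran_idem b) (dom_idem a)]
      _ = (a * a⁻¹ * a) * (b * b⁻¹ * b) := by simp only [mul_assoc]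
      _ = a * b := by rw [mim, mim]
  · calc b⁻¹ * a⁻¹ * (a * b) * (b⁻¹ * a⁻¹) = b⁻¹ * ((a⁻¹ * a) * (b * b⁻¹)) * a⁻¹ := by
          simp only [mul_assoc]
      _ = b⁻¹ * ((b * b⁻¹) * (a⁻¹ * a)) * a⁻¹ := by rw [idem_comm (dom_idem a) (ran_idem b)]
      _ = (b⁻¹ * b * b⁻¹) * (a⁻¹ * a * a⁻¹) := by simp only [mul_assoc]
      _ = b⁻¹ * a⁻¹ := by rw [imi, imi]

private lemma idem_zero : IsIdem (0 : S) := BooleanInverseMonoid.mul_zero 0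

private lemma nle_zero (x : S) : nle (0 : S) x :=
  ⟨0, idem_zero, (BooleanInverseMonoid.mul_zero x).symm⟩

private lemma nle_refl (a : S) : nle a a := ⟨1, one_mul 1, (mul_one a).symm⟩

private lemma nle_trans {a b c : S} (h1 : nle a b) (h2 : nle b c) : nle a c := by
  obtain ⟨e, he, rfl⟩ := h1
  obtain ⟨f, hf, rfl⟩ := h2
  exact ⟨f * e, idem_mul hf he, by rw [mul_assoc]⟩

private lemma nle_dom {u s : S} (h : nle u s) : u = s * (u⁻¹ * u) := by
  obtain ⟨e, he, rfl⟩ := h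
  calc s * e = s * s⁻¹ * s * (e * e) := by rw [mim, he]
    _ = s * ((s⁻¹ * s) * e) * e := by simp only [mul_assoc]
    _ = s * (e * (s⁻¹ * s)) * e := by rw [idem_comm (dom_idem s) he]
    _ = s * (e * (s⁻¹ * (s * e))) := by simp only [mul_assoc]
    _ = s * ((e⁻¹ * s⁻¹) * (s * e)) := by rw [idem_inv he]; simp only [mul_assoc]
    _ = s * ((s * e)⁻¹ * (s * e)) := by rw [mul_invS]

private lemma dom_mul_idem (s : S) {e : S} (he : IsIdem e) :
    (s * e)⁻¹ * (s * e) = e * ((s⁻¹ * s) * e) := by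
  rw [mul_invS, idem_inv he]; simp only [mul_assoc]

private lemma dom_mono {u s : S} (h : nle u s) : (u⁻¹ * u) * (s⁻¹ * s) = u⁻¹ * u := by
  obtain ⟨e, he, rfl⟩ := h
  have hk : IsIdem (s⁻¹ * s) := dom_idem s
  have hd : (s * e)⁻¹ * (s * e) = e * ((s⁻¹ * s) * e) := by
    rw [mul_invS, idem_inv he]; simp only [mul_assoc]
  rw [hd]
  calc e * ((s⁻¹ * s) * e) * (s⁻¹ * s) = e * ((s⁻¹ * s) * (e * (s⁻¹ * s))) := by
        simp only [mul_assoc]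
    _ = e * ((s⁻¹ * s) * ((s⁻¹ * s) * e)) := by rw [idem_comm he hk]
    _ = e * ((s⁻¹ * s) * e) := by rw [pidem hk]

end BIMAux

theorem stmt5 {S : Type*} [BooleanInverseMonoid S] (s t : S) (hs : s ≠ 0)
    (hst : ¬ nle s t) : ∃ s' : S, s' ≠ 0 ∧ nle s' s ∧ IsMeet s' t 0 := by
  obtain ⟨m, hms, hmt, hmin⟩ := BooleanInverseMonoid.meet_exists s t
  have hidf : IsIdem (s⁻¹ * s) := BIMAux.dom_idem s
  have hide : IsIdem (m⁻¹ * m) := BIMAux.dom_idem m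
  have hef : (m⁻¹ * m) * (s⁻¹ * s) = m⁻¹ * m := BIMAux.dom_mono hms
  obtain ⟨e', hide', hee', hjoin⟩ := BooleanInverseMonoid.idem_compl (m⁻¹ * m) hide
  set f := s⁻¹ * s with hfdef
  set e := m⁻¹ * m with hedef
  have hide'' : IsIdem (f * e') := BIMAux.idem_mul hidf hide'
  have hfe'' : f * (f * e') = f * e' := BIMAux.pidem hidf e'
  have hdom'' : (s * (f * e'))⁻¹ * (s * (f * e')) = f * e' := by
    rw [BIMAux.dom_mul_idem s hide'', ← hfdef, hfe'']
    exact hide''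
  refine ⟨s * (f * e'), ?_, ⟨f * e', hide'', rfl⟩, BIMAux.nle_zero _, BIMAux.nle_zero _, ?_⟩
  · intro h0
    have haux : f * (f * e') = s⁻¹ * (s * (f * e')) := by
      rw [hfdef]; simp only [mul_assoc]
    have h1 : f * e' = 0 := by
      rw [← hfe'', haux, h0, BooleanInverseMonoid.mul_zero]
    have hj := BooleanInverseMonoid.idem_distrib f e e' 1 hidf hide hide' hjoin
    have hfe : f * e = e := by rw [BIMAux.idem_comm hidf hide, hef]
    rw [hfe, h1, mul_one] at hj
    have hfle : nle f e := hj.2.2 e (BIMAux.nle_refl e) (BIMAux.nle_zero e)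
    obtain ⟨g, hg, hfg⟩ := hfle
    have hsf : s = s * f := by rw [hfdef, BIMAux.tmim]
    have hse : s * e = m := by rw [hedef, ← BIMAux.nle_dom hms]
    have hsm : nle s m := by
      refine ⟨g, hg, ?_⟩
      rw [← hse]
      calc s = s * f := hsf
        _ = s * (e * g) := by rw [hfg]
        _ = s * e * g := (mul_assoc s e g).symm
    exact hst (BIMAux.nle_trans hsm hmt)
  · intro u hus' hut
    have husS : nle u s := BIMAux.nle_trans hus' ⟨f * e', hide'', rfl⟩
    have hum : nle u m := hmin u husS hut
    have hd1 : (u⁻¹ * u) * e = u⁻¹ * u := by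
      have h := BIMAux.dom_mono hum
      rw [← hedef] at h
      exact h
    have hd2 : (u⁻¹ * u) * (f * e') = u⁻¹ * u := by
      have h := BIMAux.dom_mono hus'
      rw [hdom''] at h
      exact h
    have hd3 : (u⁻¹ * u) * e' = u⁻¹ * u := by
      calc (u⁻¹ * u) * e' = (u⁻¹ * u) * (f * e') * e' := by rw [hd2]
        _ = (u⁻¹ * u) * (f * (e' * e')) := by simp only [mul_assoc]
        _ = (u⁻¹ * u) * (f * e') := by rw [hide']
        _ = u⁻¹ * u := hd2
    have hd0 : u⁻¹ * u = 0 := by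
      calc u⁻¹ * u = (u⁻¹ * u) * e' := hd3.symm
        _ = ((u⁻¹ * u) * e) * e' := by rw [hd1]
        _ = (u⁻¹ * u) * (e * e') := by rw [mul_assoc]
        _ = (u⁻¹ * u) * 0 := by rw [hee']
        _ = 0 := BooleanInverseMonoid.mul_zero _
    have hu0 : u = 0 := by
      calc u = u * (u⁻¹ * u) := (BIMAux.tmim u).symm
        _ = u * 0 := by rw [hd0]
        _ = 0 := BooleanInverseMonoid.mul_zero u
    rw [hu0]
    exact BIMAux.nle_zero 0
end

section
/- Let F be a filter in a boolean inverse monoid S. Then F is an ultrafilter if and only if for every s ∈ S, (s ∧ a ≠ 0 for all a ∈ F) implies s ∈ F. -/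
section Aux
variable {S : Type*} [BooleanInverseMonoid S]

open BooleanInverseMonoid

lemma inv_invS (a : S) : a⁻¹⁻¹ = a :=
  (inv_unique a⁻¹ a (inv_mul_inv a) (mul_inv_mul a)).symm

lemma idem_invS {e : S} (he : IsIdem e) : e⁻¹ = e := by
  have h : e * e * e = e := by rw [he, he]
  exact (inv_unique e e h h).symm

lemma idem_mulS {e f : S} (he : IsIdem e) (hf : IsIdem f) : IsIdem (e * f) := by
  have hee : e * e = e := he
  have hff : f * f = f := hf
  have hmim : (e * f) * (e * f)⁻¹ * (e * f) = e * f := mul_inv_mul (e * f)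
  have himi : (e * f)⁻¹ * (e * f) * (e * f)⁻¹ = (e * f)⁻¹ := inv_mul_inv (e * f)
  have h1 : (e * f) * (f * (e * f)⁻¹ * e) * (e * f) = e * f := by
    calc (e * f) * (f * (e * f)⁻¹ * e) * (e * f)
        = e * (f * f) * (e * f)⁻¹ * (e * e) * f := by simp only [mul_assoc]
      _ = (e * f) * (e * f)⁻¹ * (e * f) := by rw [hee, hff]; simp only [mul_assoc]
      _ = e * f := hmim
  have h2 : (f * (e * f)⁻¹ * e) * (e * f) * (f * (e * f)⁻¹ * e) = f * (e * f)⁻¹ * e := by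
    calc (f * (e * f)⁻¹ * e) * (e * f) * (f * (e * f)⁻¹ * e)
        = f * (e * f)⁻¹ * (e * e) * (f * f) * (e * f)⁻¹ * e := by simp only [mul_assoc]
      _ = f * ((e * f)⁻¹ * (e * f) * (e * f)⁻¹) * e := by rw [hee, hff]; simp only [mul_assoc]
      _ = f * (e * f)⁻¹ * e := by rw [himi]
  have key : f * (e * f)⁻¹ * e = (e * f)⁻¹ := inv_unique (e * f) _ h1 h2
  have hxx : IsIdem ((e * f)⁻¹) := by
    show (e * f)⁻¹ * (e * f)⁻¹ = (e * f)⁻¹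
    calc (e * f)⁻¹ * (e * f)⁻¹
        = (f * (e * f)⁻¹ * e) * (f * (e * f)⁻¹ * e) := by rw [key]
      _ = f * ((e * f)⁻¹ * (e * f) * (e * f)⁻¹) * e := by simp only [mul_assoc]
      _ = f * (e * f)⁻¹ * e := by rw [himi]
      _ = (e * f)⁻¹ := key
  have heq : e * f = (e * f)⁻¹ := by
    have h := idem_invS hxx
    rw [inv_invS] at h
    exact h
  show e * f * (e * f) = e * f
  rw [heq]
  exact hxx

lemma nle_reflS (s : S) : nle s s := by
  refine ⟨s⁻¹ * s, ?_, ?_⟩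
  · unfold IsIdem
    calc s⁻¹ * s * (s⁻¹ * s) = s⁻¹ * (s * s⁻¹ * s) := by simp only [mul_assoc]
      _ = s⁻¹ * s := by rw [mul_inv_mul]
  · rw [← mul_assoc, mul_inv_mul]

lemma nle_transS {s t u : S} (h1 : nle s t) (h2 : nle t u) : nle s u := by
  obtain ⟨e, he, rfl⟩ := h1
  obtain ⟨f, hf, rfl⟩ := h2
  exact ⟨f * e, idem_mulS hf he, by simp only [mul_assoc]⟩

lemma nle_zeroS {s : S} (h : nle s 0) : s = 0 := by
  obtain ⟨e, _, rfl⟩ := h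
  exact zero_mul e

end Aux

theorem stmt7 {S : Type*} [BooleanInverseMonoid S] (F : Set S) (hF : IsProperFilter F) :
    IsUltrafilter' F ↔
      ∀ s : S, (∀ a ∈ F, ∀ m : S, IsMeet s a m → m ≠ 0) → s ∈ F := by
  obtain ⟨⟨hne, hup, hdir⟩, h0⟩ := hF
  constructor
  · rintro ⟨_, hmax⟩ s hs
    set G : Set S := {t | ∃ a ∈ F, ∃ m, IsMeet s a m ∧ nle m t} with hG
    have hFG : F ⊆ G := fun a ha => by
      obtain ⟨m, hm⟩ := BooleanInverseMonoid.meet_exists s a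
      exact ⟨a, ha, m, hm, hm.2.1⟩
    have hGP : IsProperFilter G := by
      refine ⟨⟨?_, ?_, ?_⟩, ?_⟩
      · obtain ⟨a, ha⟩ := hne
        exact ⟨a, hFG ha⟩
      · rintro t u ⟨a, ha, m, hm, hmt⟩ htu
        exact ⟨a, ha, m, hm, nle_transS hmt htu⟩
      · rintro t1 t2 ⟨a1, ha1, m1, hm1, hmt1⟩ ⟨a2, ha2, m2, hm2, hmt2⟩
        obtain ⟨b, hb, hba1, hba2⟩ := hdir a1 a2 ha1 ha2
        obtain ⟨m, hm⟩ := BooleanInverseMonoid.meet_exists s b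
        have h1 : nle m m1 := hm1.2.2 m hm.1 (nle_transS hm.2.1 hba1)
        have h2 : nle m m2 := hm2.2.2 m hm.1 (nle_transS hm.2.1 hba2)
        exact ⟨m, ⟨b, hb, m, hm, nle_reflS m⟩,
          nle_transS h1 hmt1, nle_transS h2 hmt2⟩
      · rintro ⟨a, ha, m, hm, hm0⟩
        exact hs a ha m hm (nle_zeroS hm0)
    have hGF : G = F := hmax G hGP hFG
    obtain ⟨a, ha⟩ := hne
    obtain ⟨m, hm⟩ := BooleanInverseMonoid.meet_exists s a
    have hsG : s ∈ G := ⟨a, ha, m, hm, hm.1⟩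
    rwa [hGF] at hsG
  · intro hcond
    refine ⟨⟨⟨hne, hup, hdir⟩, h0⟩, fun G hG hFG => ?_⟩
    refine Set.Subset.antisymm (fun t ht => ?_) hFG
    apply hcond
    intro a ha m hm heq
    obtain ⟨u, huG, hut, hua⟩ := hG.1.2.2 t a ht (hFG ha)
    have hum : nle u m := hm.2.2 u hut hua
    rw [heq] at hum
    have hu0 : u = 0 := nle_zeroS hum
    rw [hu0] at huG
    exact hG.2 huG
end

section
/- Let S be a boolean inverse monoid and a ∈ S nonzero. The intersection of all ultrafilters containing a equals the principal filter a↑ = {s : a ≤ s}. -/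
namespace BIMaux
open BooleanInverseMonoid
variable {S : Type*} [BooleanInverseMonoid S]

lemma idem_inv {e : S} (he : IsIdem e) : e⁻¹ = e :=
  (inv_unique e e (by rw [he, he]) (by rw [he, he])).symm

lemma inv_inv' (a : S) : a⁻¹⁻¹ = a :=
  (inv_unique a⁻¹ a (inv_mul_inv a) (mul_inv_mul a)).symm

lemma idem_dd (s : S) : IsIdem (s⁻¹ * s) := by
  show s⁻¹ * s * (s⁻¹ * s) = s⁻¹ * s
  calc s⁻¹ * s * (s⁻¹ * s) = s⁻¹ * (s * s⁻¹ * s) := by simp [mul_assoc]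
  _ = s⁻¹ * s := by rw [mul_inv_mul]

lemma idem_zero : IsIdem (0 : S) := BooleanInverseMonoid.zero_mul 0

lemma idem_mul {e f : S} (he : IsIdem e) (hf : IsIdem f) : IsIdem (e * f) := by
  have he' : e * e = e := he
  have hf' : f * f = f := hf
  set b := (e * f)⁻¹ with hb
  have key : b * (e * f) * b = b := inv_mul_inv (e * f)
  have h1 : (e * f) * (f * b * e) * (e * f) = e * f := by
    have step : (e * f) * (f * b * e) * (e * f) = e * ((f * f) * b * (e * e)) * f := by
      simp [mul_assoc]
    rw [step, hf', he']
    have step2 : e * (f * b * e) * f = (e * f) * b * (e * f) := by simp [mul_assoc]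
    rw [step2, mul_inv_mul]
  have h2 : (f * b * e) * (e * f) * (f * b * e) = f * b * e := by
    have step : (f * b * e) * (e * f) * (f * b * e) = f * (b * ((e * e) * (f * f)) * b) * e := by
      simp [mul_assoc]
    rw [step, hf', he']
    have step2 : f * (b * (e * f) * b) * e = f * b * e := by rw [key]
    exact step2
  have hbval : f * b * e = b := inv_unique (e * f) (f * b * e) h1 h2
  have hbidem : IsIdem b := by
    have expand : b * b = (f * b * e) * (f * b * e) := by rw [hbval]
    show b * b = b
    rw [expand]
    calc (f * b * e) * (f * b * e) = f * (b * (e * f) * b) * e := by simp [mul_assoc]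
    _ = f * b * e := by rw [key]
    _ = b := hbval
  have hefb : e * f = b := by
    rw [← inv_inv' (e * f), ← hb, idem_inv hbidem]
  rw [hefb]; exact hbidem

lemma idem_comm {e f : S} (he : IsIdem e) (hf : IsIdem f) : e * f = f * e := by
  have hef := idem_mul he hf
  have hfe := idem_mul hf he
  have h1 : (e * f) * (f * e) * (e * f) = e * f := by
    have step : (e * f) * (f * e) * (e * f) = e * ((f * f) * (e * e)) * f := by simp [mul_assoc]
    rw [step, hf, he]
    have : e * (f * e) * f = (e * f) * (e * f) := by simp [mul_assoc]
    rw [this, hef]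
  have h2 : (f * e) * (e * f) * (f * e) = f * e := by
    have step : (f * e) * (e * f) * (f * e) = f * ((e * e) * (f * f)) * e := by simp [mul_assoc]
    rw [step, he, hf]
    have : f * (e * f) * e = (f * e) * (f * e) := by simp [mul_assoc]
    rw [this, hfe]
  have : f * e = (e * f)⁻¹ := inv_unique (e * f) (f * e) h1 h2
  rw [this, idem_inv hef]

lemma nle_refl (s : S) : nle s s :=
  ⟨s⁻¹ * s, idem_dd s, by rw [← mul_assoc, mul_inv_mul]⟩

lemma nle_trans {s t u : S} (h1 : nle s t) (h2 : nle t u) : nle s u := by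
  obtain ⟨e, he, hse⟩ := h1
  obtain ⟨f, hf, htf⟩ := h2
  exact ⟨f * e, idem_mul hf he, by rw [hse, htf, mul_assoc]⟩

lemma zero_nle (s : S) : nle 0 s :=
  ⟨0, idem_zero, (BooleanInverseMonoid.mul_zero s).symm⟩

lemma eq_zero_of_nle_zero {s : S} (h : nle s 0) : s = 0 := by
  obtain ⟨e, _, hse⟩ := h
  rw [hse, BooleanInverseMonoid.zero_mul]

lemma idem_absorb {e x : S} (he : IsIdem e) (h : nle x e) : e * x = x := by
  obtain ⟨g, _, hx⟩ := h
  rw [hx, ← mul_assoc, he]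

lemma idem_rr (s : S) : IsIdem (s * s⁻¹) := by
  have := idem_dd (s⁻¹ : S)
  rwa [inv_inv'] at this

lemma mul_inv_rev' (a b : S) : (a * b)⁻¹ = b⁻¹ * a⁻¹ := by
  have hc : b * b⁻¹ * (a⁻¹ * a) = a⁻¹ * a * (b * b⁻¹) := idem_comm (idem_rr b) (idem_dd a)
  refine (inv_unique (a * b) (b⁻¹ * a⁻¹) ?_ ?_).symm
  · calc (a * b) * (b⁻¹ * a⁻¹) * (a * b) = a * (b * b⁻¹ * (a⁻¹ * a)) * b := by simp [mul_assoc]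
    _ = a * (a⁻¹ * a * (b * b⁻¹)) * b := by rw [hc]
    _ = (a * a⁻¹ * a) * (b * b⁻¹ * b) := by simp [mul_assoc]
    _ = a * b := by rw [mul_inv_mul, mul_inv_mul]
  · calc (b⁻¹ * a⁻¹) * (a * b) * (b⁻¹ * a⁻¹) = b⁻¹ * (a⁻¹ * a * (b * b⁻¹)) * a⁻¹ := by simp [mul_assoc]
    _ = b⁻¹ * (b * b⁻¹ * (a⁻¹ * a)) * a⁻¹ := by rw [hc]
    _ = (b⁻¹ * b * b⁻¹) * (a⁻¹ * a * a⁻¹) := by simp [mul_assoc]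
    _ = b⁻¹ * a⁻¹ := by rw [inv_mul_inv, inv_mul_inv]

lemma nle_d {u t : S} (h : nle u t) : nle (u⁻¹ * u) (t⁻¹ * t) := by
  obtain ⟨e, he, hu⟩ := h
  refine ⟨e, he, ?_⟩
  rw [hu, mul_inv_rev', idem_inv he]
  calc e * t⁻¹ * (t * e) = e * (t⁻¹ * t) * e := by simp [mul_assoc]
  _ = t⁻¹ * t * e * e := by rw [idem_comm he (idem_dd t)]
  _ = t⁻¹ * t * e := by rw [mul_assoc, he]

lemma nle_char {s t : S} (h : nle s t) : s = t * (s⁻¹ * s) := by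
  obtain ⟨e, he, hs⟩ := h
  have hd : s⁻¹ * s = t⁻¹ * t * e := by
    rw [hs, mul_inv_rev', idem_inv he]
    calc e * t⁻¹ * (t * e) = e * (t⁻¹ * t) * e := by simp [mul_assoc]
    _ = t⁻¹ * t * e * e := by rw [idem_comm he (idem_dd t)]
    _ = t⁻¹ * t * e := by rw [mul_assoc, he]
  rw [hd, ← mul_assoc, ← mul_assoc, mul_inv_mul, ← hs]

lemma idem_antisymm {e f : S} (he : IsIdem e) (hf : IsIdem f)
    (h1 : nle e f) (h2 : nle f e) : e = f := by
  have a1 : f * e = e := idem_absorb hf h1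
  have a2 : e * f = f := idem_absorb he h2
  rw [← a2, idem_comm he hf, a1]

lemma nle_antisymm {s t : S} (h1 : nle s t) (h2 : nle t s) : s = t := by
  have hd : s⁻¹ * s = t⁻¹ * t :=
    idem_antisymm (idem_dd s) (idem_dd t) (nle_d h1) (nle_d h2)
  have := nle_char h2
  rw [this, ← hd, ← mul_assoc, mul_inv_mul]


lemma principal_filter (b : S) : IsFilter' {s : S | nle b s} :=
  ⟨⟨b, nle_refl b⟩, fun _ _ hs hst => nle_trans hs hst,
   fun s t hs ht => ⟨b, nle_refl b, hs, ht⟩⟩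

lemma exists_ultrafilter {F : Set S} (hF : IsProperFilter F) :
    ∃ U, IsUltrafilter' U ∧ F ⊆ U := by
  have hH : ∀ c ⊆ {G : Set S | IsProperFilter G}, IsChain (· ⊆ ·) c → c.Nonempty →
      ∃ ub ∈ {G : Set S | IsProperFilter G}, ∀ s ∈ c, s ⊆ ub := by
    rintro c hc hchain ⟨G0, hG0⟩
    have htot : ∀ {G1 G2 : Set S}, G1 ∈ c → G2 ∈ c → G1 ⊆ G2 ∨ G2 ⊆ G1 := by
      intro G1 G2 h1 h2
      rcases eq_or_ne G1 G2 with rfl | hne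
      · exact Or.inl (subset_refl _)
      · exact hchain h1 h2 hne
    refine ⟨⋃₀ c, ⟨⟨?_, ?_, ?_⟩, ?_⟩, fun s hs => Set.subset_sUnion_of_mem hs⟩
    · obtain ⟨x, hx⟩ := (hc hG0).1.1
      exact ⟨x, G0, hG0, hx⟩
    · rintro s t ⟨G, hGc, hsG⟩ hst
      exact ⟨G, hGc, (hc hGc).1.2.1 s t hsG hst⟩
    · rintro s t ⟨G1, h1, hs⟩ ⟨G2, h2, ht⟩
      rcases htot h1 h2 with hsub | hsub
      · obtain ⟨u, huG, hu1, hu2⟩ := (hc h2).1.2.2 s t (hsub hs) ht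
        exact ⟨u, ⟨G2, h2, huG⟩, hu1, hu2⟩
      · obtain ⟨u, huG, hu1, hu2⟩ := (hc h1).1.2.2 s t hs (hsub ht)
        exact ⟨u, ⟨G1, h1, huG⟩, hu1, hu2⟩
    · rintro ⟨G, hGc, h0⟩
      exact (hc hGc).2 h0
  obtain ⟨U, hFU, hU⟩ := zorn_subset_nonempty {G : Set S | IsProperFilter G} hH F hF
  exact ⟨U, ⟨hU.prop, fun G hG hsub => Set.Subset.antisymm (hU.2 hG hsub) hsub⟩, hFU⟩

lemma mul_d (s : S) : s * (s⁻¹ * s) = s := by rw [← mul_assoc, mul_inv_mul]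

lemma d_mul_idem (a : S) {f : S} (hf : IsIdem f) :
    (a * f)⁻¹ * (a * f) = f * (a⁻¹ * a) * f := by
  rw [mul_inv_rev', idem_inv hf]
  simp [mul_assoc]

end BIMaux

open BooleanInverseMonoid BIMaux in
theorem stmt9 {S : Type*} [BooleanInverseMonoid S] (a : S) (ha : a ≠ 0) :
    ⋂₀ {F : Set S | IsUltrafilter' F ∧ a ∈ F} = {s : S | nle a s} := by
  ext s
  simp only [Set.mem_sInter, Set.mem_setOf_eq]
  constructor
  · intro hs
    by_contra hns
    obtain ⟨m, hma, hms, hmmax⟩ := meet_exists a s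
    have hda : IsIdem (a⁻¹ * a) := idem_dd a
    have hdm : IsIdem (m⁻¹ * m) := idem_dd m
    have hdmda : nle (m⁻¹ * m) (a⁻¹ * a) := nle_d hma
    have habs : (a⁻¹ * a) * (m⁻¹ * m) = m⁻¹ * m := idem_absorb hda hdmda
    have habs' : (m⁻¹ * m) * (a⁻¹ * a) = m⁻¹ * m := by
      rw [idem_comm hdm hda]; exact habs
    obtain ⟨e', he', horth, hjoin⟩ := idem_compl (m⁻¹ * m) hdm
    set f := (a⁻¹ * a) * e' with hf
    have hfidem : IsIdem f := idem_mul hda he'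
    set b := a * f with hb
    have hba : nle b a := ⟨f, hfidem, rfl⟩
    -- d(b) = f
    have hdb : b⁻¹ * b = f := by
      rw [hb, d_mul_idem a hfidem]
      calc f * (a⁻¹ * a) * f = (a⁻¹ * a) * f * f := by rw [idem_comm hfidem hda]
      _ = (a⁻¹ * a) * f := by rw [mul_assoc, hfidem]
      _ = f := by rw [hf, ← mul_assoc, hda]
    -- a * (m⁻¹ * m) = m
    have ham : a * (m⁻¹ * m) = m := by
      obtain ⟨e0, he0, hm0⟩ := hma
      have hdmval : m⁻¹ * m = (a⁻¹ * a) * e0 := by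
        rw [hm0, d_mul_idem a he0]
        calc e0 * (a⁻¹ * a) * e0 = (a⁻¹ * a) * e0 * e0 := by rw [idem_comm he0 hda]
        _ = (a⁻¹ * a) * e0 := by rw [mul_assoc, he0]
      rw [hdmval, ← mul_assoc, mul_d, ← hm0]
    -- dm * f = 0
    have hdmf : (m⁻¹ * m) * f = 0 := by
      rw [hf, ← mul_assoc, habs', horth]
    -- b ≠ 0
    have hbne : b ≠ 0 := by
      intro hb0
      have hf0 : f = 0 := by
        rw [← hdb, hb0, BooleanInverseMonoid.mul_zero]
      have hdistrib := idem_distrib (a⁻¹ * a) (m⁻¹ * m) e' 1 hda hdm he' hjoin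
      rw [mul_one, habs, ← hf, hf0] at hdistrib
      have hdadm : nle (a⁻¹ * a) (m⁻¹ * m) :=
        hdistrib.2.2 (m⁻¹ * m) (nle_refl _) (zero_nle _)
      have heq : m⁻¹ * m = a⁻¹ * a := nle_antisymm hdmda hdadm
      have : a = m := by rw [← mul_d a, ← heq, ham]
      exact hns (this ▸ hms)
    -- common lower bounds of b and s are 0
    have hkey : ∀ u : S, nle u b → nle u s → u = 0 := by
      intro u hub hus
      have hua : nle u a := nle_trans hub hba
      have hum : nle u m := hmmax u hua hus
      have h1 : nle (u⁻¹ * u) (m⁻¹ * m) := nle_d hum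
      have h2 : nle (u⁻¹ * u) f := by
        have := nle_d hub
        rwa [hdb] at this
      have a1 : (m⁻¹ * m) * (u⁻¹ * u) = u⁻¹ * u := idem_absorb hdm h1
      have a2 : f * (u⁻¹ * u) = u⁻¹ * u := idem_absorb hfidem h2
      have hdu0 : u⁻¹ * u = 0 := by
        calc u⁻¹ * u = (m⁻¹ * m) * (f * (u⁻¹ * u)) := by rw [a2, a1]
        _ = (m⁻¹ * m) * f * (u⁻¹ * u) := by rw [← mul_assoc]
        _ = 0 := by rw [hdmf, BooleanInverseMonoid.zero_mul]
      rw [← mul_d u, hdu0, BooleanInverseMonoid.mul_zero]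
    -- extend principal filter of b to an ultrafilter
    have hproper : IsProperFilter {x : S | nle b x} := by
      refine ⟨principal_filter b, fun h0 => hbne (eq_zero_of_nle_zero h0)⟩
    obtain ⟨U, hU, hsub⟩ := exists_ultrafilter hproper
    have hbU : b ∈ U := hsub (nle_refl b)
    have haU : a ∈ U := hU.1.1.2.1 b a hbU hba
    have hsU : s ∈ U := hs U ⟨hU, haU⟩
    obtain ⟨u, huU, hub, hus⟩ := hU.1.1.2.2 b s hbU hsU
    have hu0 : u = 0 := hkey u hub hus
    exact hU.1.2 (hu0 ▸ huU)
  · rintro hsa F ⟨hF, haF⟩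
    exact hF.1.1.2.1 a s haF hsa
end

section
/- In an inverse semigroup S with a meet semilattice natural partial order, every filter F is a coset, i.e., F F⁻¹ F = F, where products are taken setwise and F⁻¹ = {f⁻¹ : f ∈ F}. -/
namespace Stmt10Aux

variable {S : Type*} [InverseSemigroup S]

lemma mim (a : S) : a * a⁻¹ * a = a := InverseSemigroup.mul_inv_mul a
lemma imi (a : S) : a⁻¹ * a * a⁻¹ = a⁻¹ := InverseSemigroup.inv_mul_inv a
lemma iu (a b : S) (h1 : a * b * a = a) (h2 : b * a * b = b) : b = a⁻¹ :=
  InverseSemigroup.inv_unique a b h1 h2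

lemma inv_inv' (a : S) : a⁻¹⁻¹ = a := (iu a⁻¹ a (imi a) (mim a)).symm

lemma idem_inv {e : S} (he : IsIdem e) : e⁻¹ = e := by
  have : e = e⁻¹ := iu e e (by rw [he, he]) (by rw [he, he])
  exact this.symm

lemma idem_mul {e f : S} (he : IsIdem e) (hf : IsIdem f) : IsIdem (e * f) := by
  set b := (e * f)⁻¹ with hb
  have key : f * b * e = b := by
    apply iu
    · -- (e*f) * (f*b*e) * (e*f) = e*f
      have h1 : e * f * (e * f)⁻¹ * (e * f) = e * f := mim (e * f)
      calc e * f * (f * b * e) * (e * f)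
          = e * (f * f) * b * (e * e) * f := by simp only [mul_assoc]
        _ = e * f * b * (e * f) := by rw [he, hf]; simp only [mul_assoc]
        _ = e * f := h1
    · have h2 : (e * f)⁻¹ * (e * f) * (e * f)⁻¹ = (e * f)⁻¹ := imi (e * f)
      calc f * b * e * (e * f) * (f * b * e)
          = f * (b * (e * e) * (f * f) * b) * e := by simp only [mul_assoc]
        _ = f * (b * (e * f) * b) * e := by rw [he, hf, mul_assoc b e f]
        _ = f * b * e := by rw [← hb] at h2; rw [h2]
  have hbidem : IsIdem b := by
    have h2 : b * (e * f) * b = b := by rw [hb]; exact imi (e * f)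
    calc b * b = (f * b * e) * (f * b * e) := by rw [key]
      _ = f * (b * (e * f) * b) * e := by simp only [mul_assoc]
      _ = f * b * e := by rw [h2]
      _ = b := key
  have : e * f = b⁻¹ := by rw [hb, inv_inv']
  rw [this, idem_inv hbidem]; exact hbidem

lemma idem_comm {e f : S} (he : IsIdem e) (hf : IsIdem f) : e * f = f * e := by
  have hef := idem_mul he hf
  have hfe := idem_mul hf he
  have : f * e = (e * f)⁻¹ := by
    apply iu
    · calc e * f * (f * e) * (e * f)
          = e * (f * f) * (e * e) * f := by simp only [mul_assoc]
        _ = (e * f) * (e * f) := by rw [he, hf]; simp only [mul_assoc]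
        _ = e * f := hef
    · calc f * e * (e * f) * (f * e)
          = f * (e * e) * (f * f) * e := by simp only [mul_assoc]
        _ = (f * e) * (f * e) := by rw [he, hf]; simp only [mul_assoc]
        _ = f * e := hfe
  rw [this, idem_inv hef]

lemma idem_inv_mul (a : S) : IsIdem (a⁻¹ * a) := by
  show a⁻¹ * a * (a⁻¹ * a) = a⁻¹ * a
  calc a⁻¹ * a * (a⁻¹ * a) = a⁻¹ * a * a⁻¹ * a := by simp only [mul_assoc]
    _ = a⁻¹ * a := by rw [imi]

lemma idem_mul_inv (a : S) : IsIdem (a * a⁻¹) := by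
  show a * a⁻¹ * (a * a⁻¹) = a * a⁻¹
  calc a * a⁻¹ * (a * a⁻¹) = a * a⁻¹ * a * a⁻¹ := by simp only [mul_assoc]
    _ = a * a⁻¹ := by rw [mim]

lemma mul_inv_rev' (a b : S) : (a * b)⁻¹ = b⁻¹ * a⁻¹ := by
  symm; apply iu
  · calc a * b * (b⁻¹ * a⁻¹) * (a * b)
        = a * (b * b⁻¹ * (a⁻¹ * a)) * b := by simp only [mul_assoc]
      _ = a * (a⁻¹ * a * (b * b⁻¹)) * b := by
          rw [idem_comm (idem_mul_inv b) (idem_inv_mul a)]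
      _ = a * a⁻¹ * a * (b * b⁻¹ * b) := by simp only [mul_assoc]
      _ = a * b := by rw [mim, mim]
  · calc b⁻¹ * a⁻¹ * (a * b) * (b⁻¹ * a⁻¹)
        = b⁻¹ * (a⁻¹ * a * (b * b⁻¹)) * a⁻¹ := by simp only [mul_assoc]
      _ = b⁻¹ * (b * b⁻¹ * (a⁻¹ * a)) * a⁻¹ := by
          rw [idem_comm (idem_inv_mul a) (idem_mul_inv b)]
      _ = b⁻¹ * b * b⁻¹ * (a⁻¹ * a * a⁻¹) := by simp only [mul_assoc]
      _ = b⁻¹ * a⁻¹ := by rw [imi, imi]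

lemma idem_conj {e : S} (he : IsIdem e) (t : S) : IsIdem (t⁻¹ * e * t) := by
  show t⁻¹ * e * t * (t⁻¹ * e * t) = t⁻¹ * e * t
  calc t⁻¹ * e * t * (t⁻¹ * e * t)
      = t⁻¹ * (e * (t * t⁻¹)) * (e * t) := by simp only [mul_assoc]
    _ = t⁻¹ * (t * t⁻¹ * e) * (e * t) := by rw [idem_comm he (idem_mul_inv t)]
    _ = t⁻¹ * t * t⁻¹ * (e * e) * t := by simp only [mul_assoc]
    _ = t⁻¹ * e * t := by rw [imi, he]

lemma nle_refl (a : S) : nle a a := ⟨a⁻¹ * a, idem_inv_mul a, by rw [← mul_assoc, mim]⟩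

lemma nle_trans {a b c : S} (h1 : nle a b) (h2 : nle b c) : nle a c := by
  obtain ⟨e, he, hae⟩ := h1
  obtain ⟨f, hf, hbf⟩ := h2
  exact ⟨f * e, idem_mul hf he, by rw [hae, hbf, mul_assoc]⟩

lemma nle_mul {a b c d : S} (h1 : nle a b) (h2 : nle c d) : nle (a * c) (b * d) := by
  obtain ⟨e, he, hae⟩ := h1
  obtain ⟨f, hf, hcf⟩ := h2
  refine ⟨d⁻¹ * e * d * f, idem_mul (idem_conj he d) hf, ?_⟩
  have : e * d = d * (d⁻¹ * e * d) := by
    calc e * d = e * (d * d⁻¹ * d) := by rw [mim]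
      _ = e * (d * d⁻¹) * d := by simp only [mul_assoc]
      _ = d * d⁻¹ * e * d := by rw [idem_comm he (idem_mul_inv d)]
      _ = d * (d⁻¹ * e * d) := by simp only [mul_assoc]
  calc a * c = b * e * (d * f) := by rw [hae, hcf]
    _ = b * (e * d) * f := by simp only [mul_assoc]
    _ = b * (d * (d⁻¹ * e * d)) * f := by rw [this]
    _ = b * d * (d⁻¹ * e * d * f) := by simp only [mul_assoc]

lemma nle_inv {a b : S} (h : nle a b) : nle a⁻¹ b⁻¹ := by
  obtain ⟨e, he, hae⟩ := h
  refine ⟨b * e * b⁻¹, ?_, ?_⟩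
  · have := idem_conj he b⁻¹
    rwa [inv_inv'] at this
  · rw [hae, mul_inv_rev', idem_inv he]
    calc e * b⁻¹ = e * (b⁻¹ * b * b⁻¹) := by rw [imi]
      _ = e * (b⁻¹ * b) * b⁻¹ := by simp only [mul_assoc]
      _ = b⁻¹ * b * e * b⁻¹ := by rw [idem_comm he (idem_inv_mul b)]
      _ = b⁻¹ * (b * e * b⁻¹) := by simp only [mul_assoc]

end Stmt10Aux

open Pointwise in
theorem stmt10 {S : Type*} [InverseSemigroup S] (hmeet : ∀ s t : S, ∃ m : S, IsMeet s t m)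
    (F : Set S) (hF : IsFilter' F) : F * F⁻¹ * F = F := by
  open Stmt10Aux in
  obtain ⟨hne, hup, hdir⟩ := hF
  ext x
  constructor
  · rintro ⟨y, ⟨a, ha, bi, hbi, rfl⟩, c, hc, rfl⟩
    have hbmem : bi⁻¹ ∈ F := hbi
    obtain ⟨v, hv, hva, hvb⟩ := hdir a bi⁻¹ ha hbmem
    obtain ⟨u, hu, huv, huc⟩ := hdir v c hv hc
    have hua : nle u a := nle_trans huv hva
    have hub : nle u bi⁻¹ := nle_trans huv hvb
    have hubi : nle u⁻¹ bi := by
      have := nle_inv hub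
      rwa [inv_inv'] at this
    have : nle (u * u⁻¹ * u) (a * bi * c) := nle_mul (nle_mul hua hubi) huc
    rw [mim] at this
    exact hup u _ hu this
  · intro hx
    have h1 : x * x⁻¹ ∈ F * F⁻¹ :=
      Set.mul_mem_mul hx (by show x⁻¹ ∈ F⁻¹; simp only [Set.mem_inv, Stmt10Aux.inv_inv']; exact hx)
    have h2 : x * x⁻¹ * x ∈ F * F⁻¹ * F := Set.mul_mem_mul h1 hx
    rwa [mim] at h2
end

section
/- Let α : G → H be a covering functor between groupoids and B a bisection of H. Then α⁻¹(B) is a bisection of G, and the map B ↦ α⁻¹(B) satisfies α⁻¹(A B) = α⁻¹(A) α⁻¹(B) and α⁻¹(A ∩ B) = α⁻¹(A) ∩ α⁻¹(B) for all bisections A, B of H; hence it is a homomorphism of the inverse monoids of bisections. -/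
open CategoryTheory

/-- The star map induced by a functor between groupoids. -/
def starMap {G H : Type*} [Groupoid G] [Groupoid H] (F : G ⥤ H) (c : G) :
    (Σ d : G, c ⟶ d) → Σ d : H, F.obj c ⟶ d :=
  fun p => ⟨F.obj p.1, F.map p.2⟩

/-- A covering functor between groupoids: all star maps are bijections. -/
def IsCoveringFunctor {G H : Type*} [Groupoid G] [Groupoid H] (F : G ⥤ H) : Prop :=
  ∀ c : G, Function.Bijective (starMap F c)

/-- The type of arrows of a groupoid. -/
abbrev Arr (G : Type*) [Groupoid G] := Σ c : G, Σ d : G, c ⟶ d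

/-- A bisection: a set of arrows in which arrows are determined by their source,
and also by their target. -/
def IsBisection {G : Type*} [Groupoid G] (A : Set (Arr G)) : Prop :=
  (∀ p q : Arr G, p ∈ A → q ∈ A → p.1 = q.1 → p = q) ∧
  (∀ p q : Arr G, p ∈ A → q ∈ A → p.2.1 = q.2.1 → p = q)

/-- Setwise product of two sets of arrows: all defined composites. -/
def setComp {G : Type*} [Groupoid G] (A B : Set (Arr G)) : Set (Arr G) :=
  {z | ∃ (c d e : G) (f : c ⟶ d) (g : d ⟶ e),
    (⟨c, d, f⟩ : Arr G) ∈ A ∧ (⟨d, e, g⟩ : Arr G) ∈ B ∧ z = ⟨c, e, f ≫ g⟩}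

/-- Action of a functor on arrows. -/
def mapArr {G H : Type*} [Groupoid G] [Groupoid H] (F : G ⥤ H) : Arr G → Arr H :=
  fun p => ⟨F.obj p.1, F.obj p.2.1, F.map p.2.2⟩

lemma arr_pieces {H : Type*} [Groupoid H] {a b c d : H} {f : a ⟶ b} {g : c ⟶ d}
    (h : (⟨a, b, f⟩ : Arr H) = ⟨c, d, g⟩) : a = c ∧ b = d ∧ HEq f g := by
  obtain ⟨rfl, h2⟩ := Sigma.mk.inj_iff.mp h
  obtain ⟨rfl, h3⟩ := Sigma.mk.inj_iff.mp (eq_of_heq h2)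
  exact ⟨rfl, rfl, h3⟩

lemma sig_ext {X : Type*} {Y : X → Type*} {x y : X} {u : Y x} {v : Y y}
    (h : x = y) (h2 : HEq u v) : (⟨x, u⟩ : Σ a, Y a) = ⟨y, v⟩ := by
  subst h; exact congrArg _ (eq_of_heq h2)

lemma inv_sig {H : Type*} [Groupoid H] {x y d : H} (h : x = y)
    {f : x ⟶ d} {g : y ⟶ d} (h2 : HEq f g) :
    (⟨x, CategoryTheory.inv f⟩ : Σ z, d ⟶ z) = ⟨y, CategoryTheory.inv g⟩ := by
  subst h; rw [eq_of_heq h2]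

lemma comp_sig {H : Type*} [Groupoid H] {a b x y : H} (h : x = y)
    (w : a ⟶ b) {u : b ⟶ x} {v : b ⟶ y} (h2 : HEq u v) :
    (⟨x, w ≫ u⟩ : Σ z, a ⟶ z) = ⟨y, w ≫ v⟩ := by
  subst h; rw [eq_of_heq h2]

theorem stmt18 {G H : Type*} [Groupoid G] [Groupoid H] (F : G ⥤ H)
    (hF : IsCoveringFunctor F) :
    (∀ B : Set (Arr H), IsBisection B → IsBisection (mapArr F ⁻¹' B)) ∧
    (∀ A B : Set (Arr H), IsBisection A → IsBisection B →
      mapArr F ⁻¹' (setComp A B) = setComp (mapArr F ⁻¹' A) (mapArr F ⁻¹' B)) ∧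
    (∀ A B : Set (Arr H), mapArr F ⁻¹' (A ∩ B) = mapArr F ⁻¹' A ∩ mapArr F ⁻¹' B) := by
  refine ⟨?_, ?_, fun A B => Set.preimage_inter⟩
  · intro B hB
    constructor
    · rintro ⟨pc, pd, pf⟩ ⟨qc, qd, qf⟩ hp hq h1
      dsimp at h1; subst h1
      have e := hB.1 _ _ hp hq (by simp [mapArr])
      simp only [mapArr] at e
      obtain ⟨-, e2⟩ := Sigma.mk.inj_iff.mp e
      have h2 : starMap F pc ⟨pd, pf⟩ = starMap F pc ⟨qd, qf⟩ := eq_of_heq e2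
      have h3 := (hF pc).1 h2
      exact congrArg (Sigma.mk pc) h3
    · rintro ⟨pc, pd, pf⟩ ⟨qc, qd, qf⟩ hp hq h1
      dsimp at h1; subst h1
      have e := hB.2 _ _ hp hq (by simp [mapArr])
      simp only [mapArr] at e
      obtain ⟨e1, e3, e4⟩ := arr_pieces e
      have h2 : starMap F pd ⟨pc, CategoryTheory.inv pf⟩
          = starMap F pd ⟨qc, CategoryTheory.inv qf⟩ := by
        simp only [starMap, Functor.map_inv]
        exact inv_sig e1 e4
      have h3 := (hF pd).1 h2
      obtain ⟨h4, h5⟩ := Sigma.mk.inj_iff.mp h3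
      subst h4
      have h6 : pf = qf := IsIso.inv_eq_inv.mp (eq_of_heq h5)
      rw [h6]
  · intro A B _ _
    ext ⟨zc, zd, zf⟩
    constructor
    · rintro ⟨c, d, e, f, g, hfA, hgB, hz⟩
      simp only [mapArr] at hz
      obtain ⟨h1, h2⟩ := Sigma.mk.inj_iff.mp hz
      subst h1
      obtain ⟨h3, h4⟩ := Sigma.mk.inj_iff.mp (eq_of_heq h2)
      subst h3
      have hzf : F.map zf = f ≫ g := eq_of_heq h4
      obtain ⟨⟨d', f'⟩, hf'⟩ := (hF zc).2 ⟨d, f⟩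
      simp only [starMap] at hf'
      obtain ⟨hd, hf2⟩ := Sigma.mk.inj_iff.mp hf'
      subst hd
      have hf3 : F.map f' = f := eq_of_heq hf2
      obtain ⟨⟨e', g'⟩, hg'⟩ := (hF d').2 ⟨F.obj zd, g⟩
      simp only [starMap] at hg'
      obtain ⟨he, hg2⟩ := Sigma.mk.inj_iff.mp hg'
      have key : starMap F zc ⟨zd, zf⟩ = starMap F zc ⟨e', f' ≫ g'⟩ := by
        simp only [starMap, Functor.map_comp]
        rw [hzf, ← hf3]
        exact (comp_sig he (F.map f') hg2).symm
      have h5 := (hF zc).1 key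
      refine ⟨zc, d', e', f', g', ?_, ?_, congrArg (Sigma.mk zc) h5⟩
      · show mapArr F ⟨zc, d', f'⟩ ∈ A
        simpa [mapArr, hf3] using hfA
      · show mapArr F ⟨d', e', g'⟩ ∈ B
        have : mapArr F ⟨d', e', g'⟩ = ⟨F.obj d', F.obj zd, g⟩ := by
          simp only [mapArr]
          exact congrArg (Sigma.mk (F.obj d')) (sig_ext he hg2)
        rw [this]; exact hgB
    · rintro ⟨c, d, e, f, g, hfA, hgB, hz⟩
      obtain ⟨h1, h2⟩ := Sigma.mk.inj_iff.mp hz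
      subst h1
      obtain ⟨h3, h4⟩ := Sigma.mk.inj_iff.mp (eq_of_heq h2)
      subst h3
      have h5 : zf = f ≫ g := eq_of_heq h4
      subst h5
      exact ⟨F.obj zc, F.obj d, F.obj zd, F.map f, F.map g, hfA, hgB, by simp [mapArr]⟩
end
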